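/- Under the leader-following consensus hypotheses (augmented digraph has a spanning tree rooted at the leader node 0, and 0 < ε_i < 1/Σ_{j=0}^N a_{ij}), all eigenvalues of the matrix I_N - ε(L + A_{*0}) lie strictly inside the unit disk, where ε = diag(ε_1,...,ε_N), L is the follower-graph Laplacian and A_{*0} = diag(a_{10},...,a_{N0}). -/

import Mathlib

/-!
Let `M = I - ε(L + A_{*0})`. The bounds on `ε` make `M` entrywise nonnegative, and since the
Laplacian has zero row sums, row `i` of `M` sums to `1 - ε_i a_{i0} ≤ 1`, with strict inequality
exactly at the nodes fed by the leader. Take an eigenvector `v` for an eigenvalue `|z| ≥ 1` and an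
index `k` where `|v_k|` is maximal. Since `|v_k| ≤ |z| |v_k| ≤ ∑_j M_kj |v_j|` is an average of
values at most `|v_k|`, every `j` with `M_kj > 0` is again a maximum. Following the spanning
tree backwards from `k` to the leader reaches a maximal index whose row sum is `< 1`, a
contradiction.
-/

open Matrix Finset Relation

section Substochastic

variable {ι : Type*} [Fintype ι]

theorem eq_of_le_sum_mul_of_le {c w : ι → ℝ} {m : ℝ} (hc : ∀ j, 0 ≤ c j)
    (hcs : ∑ j, c j ≤ 1) (hm0 : 0 ≤ m) (hw : ∀ j, w j ≤ m) (hm : m ≤ ∑ j, c j * w j)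
    {j : ι} (hj : 0 < c j) : w j = m := by
  have hterm : ∀ j, 0 ≤ c j * (m - w j) := fun j => mul_nonneg (hc j) (sub_nonneg.2 (hw j))
  have hsum : ∑ j, c j * (m - w j) = 0 := by
    refine le_antisymm ?_ (sum_nonneg fun j _ => hterm j)
    calc ∑ j, c j * (m - w j) = (∑ j, c j) * m - ∑ j, c j * w j := by
          rw [sum_mul, ← sum_sub_distrib]; simp only [mul_sub]
      _ ≤ 0 := by nlinarith
  have := (sum_eq_zero_iff_of_nonneg fun j _ => hterm j).1 hsum j (mem_univ j)
  linarith [(mul_eq_zero.1 this).resolve_left hj.ne']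

theorem Matrix.exists_mulVec_eq_smul_of_mem_spectrum [DecidableEq ι] {K : Type*} [Field K]
    {M : Matrix ι ι K} {z : K} (hz : z ∈ spectrum K M) : ∃ v ≠ 0, M *ᵥ v = z • v := by
  rw [← Matrix.spectrum_toLin', ← Module.End.hasEigenvalue_iff_mem_spectrum] at hz
  obtain ⟨v, hv⟩ := hz.exists_hasEigenvector
  exact ⟨v, hv.2, Module.End.mem_eigenspace_iff.1 hv.1⟩

theorem norm_le_sum_mul_norm_of_mulVec_eq_smul {M : Matrix ι ι ℝ} (hM : ∀ i j, 0 ≤ M i j)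
    {v : ι → ℂ} {z : ℂ} (hz : 1 ≤ ‖z‖) (hv : M.map (Complex.ofReal ·) *ᵥ v = z • v) (k : ι) :
    ‖v k‖ ≤ ∑ j, M k j * ‖v j‖ :=
  calc ‖v k‖ ≤ ‖z‖ * ‖v k‖ := le_mul_of_one_le_left (norm_nonneg _) hz
    _ = ‖∑ j, (M k j : ℂ) * v j‖ := by rw [← norm_mul, ← smul_eq_mul, ← Pi.smul_apply, ← hv]; rfl
    _ ≤ ∑ j, ‖(M k j : ℂ) * v j‖ := norm_sum_le _ _
    _ = ∑ j, M k j * ‖v j‖ := by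
      simp only [norm_mul, Complex.norm_real, Real.norm_of_nonneg (hM k _)]

theorem norm_lt_one_of_mem_spectrum_of_reflTransGen_row_sum_lt_one [DecidableEq ι]
    {M : Matrix ι ι ℝ} (hM : ∀ i j, 0 ≤ M i j) (hrow : ∀ i, ∑ j, M i j ≤ 1)
    (hreach : ∀ i, ∃ l, ∑ j, M l j < 1 ∧ ReflTransGen (fun a b => 0 < M a b) i l)
    {z : ℂ} (hz : z ∈ spectrum ℂ (M.map (Complex.ofReal ·))) : ‖z‖ < 1 := by
  by_contra! hz1
  obtain ⟨v, hv0, hv⟩ := Matrix.exists_mulVec_eq_smul_of_mem_spectrum hz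
  obtain ⟨i, hi⟩ := Function.ne_iff.1 hv0
  have : Nonempty ι := ⟨i⟩
  obtain ⟨k, hk⟩ := Finite.exists_max fun i => ‖v i‖
  have hvk : 0 < ‖v k‖ := (norm_pos_iff.2 hi).trans_le (hk i)
  have hbound := norm_le_sum_mul_norm_of_mulVec_eq_smul hM hz1 hv
  have hmax : ∀ l, ReflTransGen (fun a b => 0 < M a b) k l → ‖v l‖ = ‖v k‖ := by
    intro l hl
    induction hl with
    | refl => rfl
    | tail _ hbc ih =>
      exact eq_of_le_sum_mul_of_le (hM _) (hrow _) hvk.le hk (ih ▸ hbound _) hbc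
  obtain ⟨l, hl1, hkl⟩ := hreach k
  have : ‖v k‖ ≤ (∑ j, M l j) * ‖v k‖ :=
    calc ‖v k‖ = ‖v l‖ := (hmax l hkl).symm
      _ ≤ ∑ j, M l j * ‖v j‖ := hbound l
      _ ≤ ∑ j, M l j * ‖v k‖ := sum_le_sum fun j _ => mul_le_mul_of_nonneg_left (hk j) (hM l j)
      _ = (∑ j, M l j) * ‖v k‖ := (sum_mul _ _ _).symm
  nlinarith

end Substochastic

section LeaderFollower

variable {ι : Type*} [Fintype ι] [DecidableEq ι] (A : Matrix ι ι ℝ) (a0 ε : ι → ℝ)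

/-- `I - ε(L + A_{*0})`, where `L = diag(∑_j a_ij) - A` is the Laplacian of the follower graph. -/
def leaderFollowerMatrix : Matrix ι ι ℝ :=
  1 - diagonal ε * (diagonal (fun i => ∑ j, A i j) - A + diagonal a0)

theorem leaderFollowerMatrix_apply (i j : ι) :
    leaderFollowerMatrix A a0 ε i j =
      (if i = j then 1 - ε i * (a0 i + ∑ k, A i k) else 0) + ε i * A i j := by
  rcases eq_or_ne i j with rfl | h
  · simp [leaderFollowerMatrix, diagonal_mul]
    ring
  · simp [leaderFollowerMatrix, diagonal_mul, h]

theorem leaderFollowerMatrix_row_sum (i : ι) :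
    ∑ j, leaderFollowerMatrix A a0 ε i j = 1 - ε i * a0 i := by
  simp only [leaderFollowerMatrix_apply, sum_add_distrib, sum_ite_eq, mem_univ, if_true, ← mul_sum]
  ring

variable {A a0 ε}

theorem leaderFollowerMatrix_nonneg (hA : ∀ i j, 0 ≤ A i j) (hε : ∀ i, 0 ≤ ε i)
    (hεc : ∀ i, ε i * (a0 i + ∑ j, A i j) ≤ 1) (i j : ι) :
    0 ≤ leaderFollowerMatrix A a0 ε i j := by
  rw [leaderFollowerMatrix_apply]
  have hεA := mul_nonneg (hε i) (hA i j)
  split_ifs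
  · linarith [hεc i]
  · linarith

theorem reflTransGen_leaderFollowerMatrix (hε : ∀ i, 0 < ε i) {i j : ι}
    (h : ReflTransGen (fun p q => 0 < A q p) j i) :
    ReflTransGen (fun k l => 0 < leaderFollowerMatrix A a0 ε k l) i j := by
  refine reflTransGen_closed (fun q p hqp => ?_) i j (reflTransGen_swap.2 h)
  rcases eq_or_ne q p with rfl | hne
  · rfl
  · refine .single ?_
    rw [leaderFollowerMatrix_apply, if_neg hne, zero_add]
    exact mul_pos (hε q) hqp

end LeaderFollower

/-- under the leader-following hypotheses, all eigenvalues of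
`I - ε(L + A_{*0})` are strictly inside the unit disk. -/
theorem stmt11 (N : ℕ)
    (A : Matrix (Fin N) (Fin N) ℝ) (hA : ∀ i j, 0 ≤ A i j)
    (a0 : Fin N → ℝ) (ha0 : ∀ i, a0 i = 0 ∨ a0 i = 1)
    (ε : Fin N → ℝ) (hε : ∀ i, 0 < ε i ∧ ε i < 1 / (a0 i + ∑ j, A i j))
    (htree : ∀ i : Fin N, ∃ j : Fin N, a0 j = 1 ∧
      Relation.ReflTransGen (fun p q : Fin N => 0 < A q p) j i)
    (Lap : Matrix (Fin N) (Fin N) ℝ)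
    (hLap : Lap = Matrix.diagonal (fun i => ∑ j, A i j) - A) :
    ∀ z ∈ spectrum ℂ
      ((1 - Matrix.diagonal ε * (Lap + Matrix.diagonal a0)).map
        (Complex.ofReal ·)), ‖z‖ < 1 := by
  intro z hz
  subst hLap
  have hεpos i : 0 < ε i := (hε i).1
  have hεc i : ε i * (a0 i + ∑ j, A i j) ≤ 1 := by
    have := (hε i).2
    have hc : 0 < a0 i + ∑ j, A i j := one_div_pos.1 ((hεpos i).trans this)
    exact ((lt_div_iff₀ hc).1 this).le
  refine norm_lt_one_of_mem_spectrum_of_reflTransGen_row_sum_lt_one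
    (M := leaderFollowerMatrix A a0 ε) (leaderFollowerMatrix_nonneg hA (fun i => (hεpos i).le) hεc)
    (fun i => ?_) (fun i => ?_) hz
  · rw [leaderFollowerMatrix_row_sum]
    rcases ha0 i with h | h <;> rw [h] <;> linarith [hεpos i]
  · obtain ⟨j, hj, hji⟩ := htree i
    refine ⟨j, ?_, reflTransGen_leaderFollowerMatrix hεpos hji⟩
    rw [leaderFollowerMatrix_row_sum, hj]
    linarith [hεpos j]
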